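/- The domination number is stable under 2-switch: for every simple graph G on a finite vertex set V and every graph G' obtained from G by a 2-switch, |γ(G') − γ(G)| ≤ 1. -/
import Mathlib


open SimpleGraph

/-- Four pairwise distinct vertices `a,b,c,d` with `ab, cd ∈ E(G)` and `ac, bd ∉ E(G)`:
the condition under which the 2-switch of `G` at `(a,b;c,d)` is performed. -/
def Switchable {V : Type*} (G : SimpleGraph V) (a b c d : V) : Prop :=
  a ≠ b ∧ a ≠ c ∧ a ≠ d ∧ b ≠ c ∧ b ≠ d ∧ c ≠ d ∧
    G.Adj a b ∧ G.Adj c d ∧ ¬ G.Adj a c ∧ ¬ G.Adj b d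

/-- The 2-switch of `G` at `(a,b;c,d)`: the graph on `V` with edge set
`(E(G) \ {ab, cd}) ∪ {ac, bd}`. -/
def twoSwitch {V : Type*} (G : SimpleGraph V) (a b c d : V) : SimpleGraph V :=
  SimpleGraph.fromEdgeSet ((G.edgeSet \ {s(a, b), s(c, d)}) ∪ {s(a, c), s(b, d)})

/-- `G'` is obtained from `G` by a 2-switch. -/
def ObtainedByTwoSwitch {V : Type*} (G G' : SimpleGraph V) : Prop :=
  ∃ a b c d : V, Switchable G a b c d ∧ G' = twoSwitch G a b c d

/-- The domination number `γ(G)`: the minimum cardinality of a set `D` of vertices such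
that every vertex not in `D` is adjacent to a vertex of `D`. -/
noncomputable def domNum {V : Type*} (G : SimpleGraph V) : ℕ :=
  sInf {n : ℕ | ∃ D : Set V, (∀ v : V, v ∉ D → ∃ u ∈ D, G.Adj u v) ∧ D.ncard = n}


lemma twoSwitch_adj {V : Type*} {G : SimpleGraph V} {a b c d u v : V} :
    (twoSwitch G a b c d).Adj u v ↔
      ((G.Adj u v ∧ s(u,v) ≠ s(a,b) ∧ s(u,v) ≠ s(c,d)) ∨
        ((s(u,v) = s(a,c) ∨ s(u,v) = s(b,d)) ∧ u ≠ v)) := by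
  simp only [twoSwitch, fromEdgeSet_adj, Set.mem_union, Set.mem_diff,
    Set.mem_insert_iff, Set.mem_singleton_iff, mem_edgeSet]
  constructor
  · rintro ⟨(⟨h1, h2⟩ | h1), hne⟩
    · exact Or.inl ⟨h1, by tauto⟩
    · exact Or.inr ⟨h1, hne⟩
  · rintro (⟨h1, h2, h3⟩ | ⟨h1, h2⟩)
    · exact ⟨Or.inl ⟨h1, by tauto⟩, h1.ne⟩
    · exact ⟨Or.inr h1, h2⟩

lemma domNum_twoSwitch_le {V : Type*} [Fintype V] (G : SimpleGraph V) (a b c d : V)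
    (h : Switchable G a b c d) :
    domNum (twoSwitch G a b c d) ≤ domNum G + 1 := by
  classical
  obtain ⟨hab, hac, had, hbc, hbd, hcd, Gab, Gcd, nGac, nGbd⟩ := h
  have hne : {n : ℕ | ∃ D : Set V, (∀ v : V, v ∉ D → ∃ u ∈ D, G.Adj u v) ∧ D.ncard = n}.Nonempty :=
    ⟨(Set.univ : Set V).ncard, Set.univ, fun v hv => absurd (Set.mem_univ v) hv, rfl⟩
  obtain ⟨D, hD, hDcard⟩ := Nat.sInf_mem hne
  set x : V := if b ∈ D ∨ d ∈ D then a else d with hx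
  have Hac : (twoSwitch G a b c d).Adj a c := twoSwitch_adj.mpr (Or.inr ⟨Or.inl rfl, hac⟩)
  have Hbd : (twoSwitch G a b c d).Adj b d := twoSwitch_adj.mpr (Or.inr ⟨Or.inr rfl, hbd⟩)
  have hdom : ∀ v : V, v ∉ D ∪ {x} → ∃ u ∈ D ∪ {x}, (twoSwitch G a b c d).Adj u v := by
    intro v hv
    have hvD : v ∉ D := fun hh => hv (Or.inl hh)
    have hvx : v ≠ x := fun hh => hv (Or.inr hh)
    obtain ⟨u, huD, huv⟩ := hD v hvD
    by_cases h1 : s(u,v) = s(a,b)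
    · rw [Sym2.eq_iff] at h1
      rcases h1 with ⟨hu, hvb⟩ | ⟨hu, hva⟩
      · -- u = a, v = b
        subst hu hvb
        refine ⟨d, ?_, Hbd.symm⟩
        by_cases hdD : d ∈ D
        · exact Or.inl hdD
        · have : x = d := by
            rw [hx, if_neg]
            push_neg
            exact ⟨hvD, hdD⟩
          exact Or.inr (this.symm)
      · -- u = b, v = a
        subst hu hva
        exfalso
        apply hvx
        rw [hx, if_pos (Or.inl huD)]
    · by_cases h2 : s(u,v) = s(c,d)
      · rw [Sym2.eq_iff] at h2
        rcases h2 with ⟨hu, hvd⟩ | ⟨hu, hvc⟩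
        · -- u = c, v = d
          subst hu hvd
          have hcond : b ∈ D ∨ v ∈ D := by
            by_contra hcon
            exact hvx (by rw [hx, if_neg hcon])
          have hbD : b ∈ D := hcond.resolve_right hvD
          exact ⟨b, Or.inl hbD, Hbd⟩
        · -- u = d, v = c
          subst hu hvc
          have : x = a := by rw [hx, if_pos (Or.inr huD)]
          exact ⟨a, Or.inr this.symm, Hac⟩
      · exact ⟨u, Or.inl huD, twoSwitch_adj.mpr (Or.inl ⟨huv, h1, h2⟩)⟩
  have hmem : (D ∪ {x}).ncard ∈
      {n : ℕ | ∃ E : Set V, (∀ v : V, v ∉ E → ∃ u ∈ E, (twoSwitch G a b c d).Adj u v) ∧ E.ncard = n} :=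
    ⟨D ∪ {x}, hdom, rfl⟩
  calc domNum (twoSwitch G a b c d) ≤ (D ∪ {x}).ncard := Nat.sInf_le hmem
    _ ≤ D.ncard + 1 := by rw [Set.union_singleton]; exact Set.ncard_insert_le x D
    _ = domNum G + 1 := by rw [hDcard]; rfl

lemma twoSwitch_reverse {V : Type*} (G : SimpleGraph V) (a b c d : V)
    (h : Switchable G a b c d) :
    Switchable (twoSwitch G a b c d) a c b d ∧
      twoSwitch (twoSwitch G a b c d) a c b d = G := by
  obtain ⟨hab, hac, had, hbc, hbd, hcd, Gab, Gcd, nGac, nGbd⟩ := h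
  have Hac : (twoSwitch G a b c d).Adj a c := twoSwitch_adj.mpr (Or.inr ⟨Or.inl rfl, hac⟩)
  have Hbd : (twoSwitch G a b c d).Adj b d := twoSwitch_adj.mpr (Or.inr ⟨Or.inr rfl, hbd⟩)
  have nHab : ¬ (twoSwitch G a b c d).Adj a b := by
    rw [twoSwitch_adj]
    rintro (⟨_, h1, _⟩ | ⟨(h1 | h1), _⟩)
    · exact h1 rfl
    · rw [Sym2.eq_iff] at h1; tauto
    · rw [Sym2.eq_iff] at h1; tauto
  have nHcd : ¬ (twoSwitch G a b c d).Adj c d := by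
    rw [twoSwitch_adj]
    rintro (⟨_, _, h1⟩ | ⟨(h1 | h1), _⟩)
    · exact h1 rfl
    · rw [Sym2.eq_iff] at h1; tauto
    · rw [Sym2.eq_iff] at h1; tauto
  refine ⟨⟨hac, hab, had, fun hh => hbc hh.symm, hcd, hbd, Hac, Hbd, nHab, nHcd⟩, ?_⟩
  ext u v
  rw [twoSwitch_adj, twoSwitch_adj]
  constructor
  · rintro (⟨(⟨hG, e1, e2⟩ | ⟨(e1 | e1), hne⟩), f1, f2⟩ | ⟨(e1 | e1), hne⟩)
    · exact hG
    · exact absurd e1 f1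
    · exact absurd e1 f2
    · rw [Sym2.eq_iff] at e1
      rcases e1 with ⟨rfl, rfl⟩ | ⟨rfl, rfl⟩
      · exact Gab
      · exact Gab.symm
    · rw [Sym2.eq_iff] at e1
      rcases e1 with ⟨rfl, rfl⟩ | ⟨rfl, rfl⟩
      · exact Gcd
      · exact Gcd.symm
  · intro hG
    by_cases e1 : s(u,v) = s(a,b)
    · exact Or.inr ⟨Or.inl e1, hG.ne⟩
    · by_cases e2 : s(u,v) = s(c,d)
      · exact Or.inr ⟨Or.inr e2, hG.ne⟩
      · refine Or.inl ⟨Or.inl ⟨hG, e1, e2⟩, ?_, ?_⟩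
        · intro hh
          rw [Sym2.eq_iff] at hh
          rcases hh with ⟨rfl, rfl⟩ | ⟨rfl, rfl⟩
          · exact nGac hG
          · exact nGac hG.symm
        · intro hh
          rw [Sym2.eq_iff] at hh
          rcases hh with ⟨rfl, rfl⟩ | ⟨rfl, rfl⟩
          · exact nGbd hG
          · exact nGbd hG.symm

/-- the domination number is stable under 2-switch. -/
theorem stmt_15 {V : Type*} [Fintype V] (G G' : SimpleGraph V)
    (h : ObtainedByTwoSwitch G G') :
    |(domNum G' : ℤ) - (domNum G : ℤ)| ≤ 1 := by
  obtain ⟨a, b, c, d, hsw, rfl⟩ := h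
  have h1 : domNum (twoSwitch G a b c d) ≤ domNum G + 1 :=
    domNum_twoSwitch_le G a b c d hsw
  obtain ⟨hsw', heq⟩ := twoSwitch_reverse G a b c d hsw
  have h2 : domNum G ≤ domNum (twoSwitch G a b c d) + 1 := by
    conv_lhs => rw [← heq]
    exact domNum_twoSwitch_le _ a c b d hsw'
  rw [abs_le]
  omega
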